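/- Let n ≥ 1, let γ₁, …, γₙ > 0, set Γ = diag(γ₁, …, γₙ, γ₁, …, γₙ) ∈ ℝ^(2n×2n) and √(2Γ) = diag(√(2γ₁), …, √(2γₙ), √(2γ₁), …, √(2γₙ)). Let F, G ∈ ℝ^(n×n) be real symmetric matrices and set 𝓜 = [[0, G−F], [−(G+F), 0]] ∈ ℝ^(2n×2n). For ω ∈ ℝ such that iωI + Γ − 𝓜 is invertible (as a complex matrix), define S(ω) = √(2Γ)(iωI + Γ − 𝓜)⁻¹√(2Γ) − I, and let J = [[0, Iₙ], [Iₙ, 0]]. Then S(ω)J is complex symmetric: S(ω)J = (S(ω)J)ᵀ. -/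

import Mathlib

/-! Conjugation by the involution `J` exchanges the two diagonal blocks and the two
off-diagonal blocks of a block matrix. Hence it fixes `Γ` and `√(2Γ)` and, as `F` and `G`
are symmetric, sends `𝓜` to `𝓜ᵀ`. So `A = iωI + Γ − 𝓜` satisfies `Aᵀ = JAJ`, hence
`(A⁻¹)ᵀ = JA⁻¹J` and `S(ω)ᵀ = JS(ω)J`; since `J = Jᵀ = J⁻¹`, this says `(S(ω)J)ᵀ = S(ω)J`. -/

open Matrix

/-- The transfer function `S(ω) = √(2Γ)(iωI + Γ − 𝓜)⁻¹√(2Γ) − I` with paired damping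
rates `Γ = diag(γ₁, …, γₙ, γ₁, …, γₙ)`. -/
noncomputable def transferFun (n : ℕ) (γ : Fin n → ℝ)
    (M : Matrix (Fin n ⊕ Fin n) (Fin n ⊕ Fin n) ℝ) (ω : ℝ) :
    Matrix (Fin n ⊕ Fin n) (Fin n ⊕ Fin n) ℂ :=
  diagonal (fun i => ((Real.sqrt (2 * Sum.elim γ γ i) : ℝ) : ℂ)) *
    ((Complex.I * (ω : ℂ)) • (1 : Matrix (Fin n ⊕ Fin n) (Fin n ⊕ Fin n) ℂ) +
      diagonal (fun i => ((Sum.elim γ γ i : ℝ) : ℂ)) - M.map Complex.ofReal)⁻¹ *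
    diagonal (fun i => ((Real.sqrt (2 * Sum.elim γ γ i) : ℝ) : ℂ)) - 1

/-- The swap matrix `J = [[0, Iₙ], [Iₙ, 0]]` over ℂ. -/
def swapJ (n : ℕ) : Matrix (Fin n ⊕ Fin n) (Fin n ⊕ Fin n) ℂ :=
  Matrix.fromBlocks 0 1 1 0

section Conjugation

variable {m R : Type*} [Fintype m] [DecidableEq m] [CommRing R] {J : Matrix m m R}

theorem transpose_inv_eq_conj (hJ : J * J = 1) {X : Matrix m m R} (hX : Xᵀ = J * X * J) :
    (X⁻¹)ᵀ = J * X⁻¹ * J := by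
  rw [transpose_nonsing_inv, hX, Matrix.mul_inv_rev, Matrix.mul_inv_rev, inv_eq_left_inv hJ,
    mul_assoc]

theorem transpose_conj_mul_conj_sub_one (hJ : J * J = 1) {D X : Matrix m m R}
    (hDT : Dᵀ = D) (hDJ : J * D * J = D) (hX : Xᵀ = J * X * J) :
    (D * X * D - 1)ᵀ = J * (D * X * D - 1) * J := by
  calc (D * X * D - 1)ᵀ = D * (J * X * J) * D - 1 := by
        rw [transpose_sub, transpose_one, transpose_mul, transpose_mul, hDT, hX]
        simp only [mul_assoc]
    _ = (J * D * J) * (J * X * J) * (J * D * J) - J * J := by rw [hDJ, hJ]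
    _ = J * (D * X * D - 1) * J := by
        simp only [mul_sub, sub_mul, mul_one, mul_assoc, hJ]
        simp only [← mul_assoc J J, hJ, one_mul]

theorem transpose_mul_eq_self_of_transpose_eq_conj (hJ : J * J = 1) (hJT : Jᵀ = J)
    {S : Matrix m m R} (hS : Sᵀ = J * S * J) : (S * J)ᵀ = S * J := by
  rw [transpose_mul, hJT, hS, ← mul_assoc, ← mul_assoc, hJ, one_mul]

end Conjugation

section SwapBlocks

variable {n R : Type*} [Fintype n] [DecidableEq n] [Semiring R]

theorem fromBlocks_swap_conj (A B C D : Matrix n n R) :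
    (fromBlocks 0 1 1 0 : Matrix (n ⊕ n) (n ⊕ n) R) * fromBlocks A B C D * fromBlocks 0 1 1 0 =
      fromBlocks D C B A := by
  simp [fromBlocks_multiply]

theorem fromBlocks_swap_mul_self :
    (fromBlocks 0 1 1 0 : Matrix (n ⊕ n) (n ⊕ n) R) * fromBlocks 0 1 1 0 = 1 := by
  simp [fromBlocks_multiply, ← fromBlocks_one]

theorem fromBlocks_swap_conj_diagonal {d : n ⊕ n → R} (hd : ∀ i, d i.swap = d i) :
    (fromBlocks 0 1 1 0 : Matrix (n ⊕ n) (n ⊕ n) R) * diagonal d * fromBlocks 0 1 1 0 =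
      diagonal d := by
  have hd' : d = Sum.elim (d ∘ Sum.inl) (d ∘ Sum.inl) := by
    funext i
    cases i with
    | inl _ => rfl
    | inr j => exact (hd (Sum.inr j)).symm
  rw [hd', ← fromBlocks_diagonal, fromBlocks_swap_conj]

theorem fromBlocks_swap_conj_offDiagonal {B C : Matrix n n R} (hB : Bᵀ = B) (hC : Cᵀ = C) :
    (fromBlocks 0 1 1 0 : Matrix (n ⊕ n) (n ⊕ n) R) * fromBlocks 0 B C 0 * fromBlocks 0 1 1 0 =
      (fromBlocks 0 B C 0)ᵀ := by
  rw [fromBlocks_swap_conj, fromBlocks_transpose, hB, hC, transpose_zero]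

end SwapBlocks

theorem swapJ_mul_self (n : ℕ) : swapJ n * swapJ n = 1 := fromBlocks_swap_mul_self

theorem swapJ_transpose (n : ℕ) : (swapJ n)ᵀ = swapJ n := by
  simp [swapJ, fromBlocks_transpose]

theorem transpose_coupling_eq_swapJ_conj {n : ℕ} {F G : Matrix (Fin n) (Fin n) ℝ}
    (hF : F = Fᵀ) (hG : G = Gᵀ) :
    ((fromBlocks 0 (G - F) (-(G + F)) 0).map Complex.ofReal)ᵀ =
      swapJ n * (fromBlocks 0 (G - F) (-(G + F)) 0).map Complex.ofReal * swapJ n := by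
  have hdiff : ((G - F).map Complex.ofReal)ᵀ = (G - F).map Complex.ofReal := by
    rw [← transpose_map, transpose_sub, ← hF, ← hG]
  have hsum : ((-(G + F)).map Complex.ofReal)ᵀ = (-(G + F)).map Complex.ofReal := by
    rw [← transpose_map, transpose_neg, transpose_add, ← hF, ← hG]
  rw [fromBlocks_map, Matrix.map_zero _ Complex.ofReal_zero]
  exact (fromBlocks_swap_conj_offDiagonal hdiff hsum).symm

theorem transpose_langevin_eq_swapJ_conj {n : ℕ} (γ : Fin n → ℝ)
    {F G : Matrix (Fin n) (Fin n) ℝ} (hF : F = Fᵀ) (hG : G = Gᵀ) (c : ℂ) :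
    (c • 1 + diagonal (fun i => ((Sum.elim γ γ i : ℝ) : ℂ)) -
        (fromBlocks 0 (G - F) (-(G + F)) 0).map Complex.ofReal)ᵀ =
      swapJ n * (c • 1 + diagonal (fun i => ((Sum.elim γ γ i : ℝ) : ℂ)) -
        (fromBlocks 0 (G - F) (-(G + F)) 0).map Complex.ofReal) * swapJ n := by
  have hΓ : swapJ n * diagonal (fun i => ((Sum.elim γ γ i : ℝ) : ℂ)) * swapJ n =
      diagonal (fun i => ((Sum.elim γ γ i : ℝ) : ℂ)) :=
    fromBlocks_swap_conj_diagonal fun i => by cases i <;> rfl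
  rw [transpose_sub, transpose_add, transpose_smul, transpose_one, diagonal_transpose,
    transpose_coupling_eq_swapJ_conj hF hG]
  simp only [mul_sub, mul_add, sub_mul, add_mul, Matrix.mul_smul, Matrix.smul_mul, mul_one,
    swapJ_mul_self, hΓ]

theorem transfer_mul_swap_symmetric_general (n : ℕ)
    (γ : Fin n → ℝ)
    (F G : Matrix (Fin n) (Fin n) ℝ) (hF : F = Fᵀ) (hG : G = Gᵀ) (ω : ℝ) :
    transferFun n γ (Matrix.fromBlocks 0 (G - F) (-(G + F)) 0) ω * swapJ n =
      (transferFun n γ (Matrix.fromBlocks 0 (G - F) (-(G + F)) 0) ω * swapJ n)ᵀ := by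
  have hD :
      swapJ n * diagonal (fun i => ((Real.sqrt (2 * Sum.elim γ γ i) : ℝ) : ℂ)) * swapJ n =
        diagonal (fun i => ((Real.sqrt (2 * Sum.elim γ γ i) : ℝ) : ℂ)) :=
    fromBlocks_swap_conj_diagonal fun i => by cases i <;> rfl
  refine (transpose_mul_eq_self_of_transpose_eq_conj (swapJ_mul_self n) (swapJ_transpose n)
    ?_).symm
  exact transpose_conj_mul_conj_sub_one (swapJ_mul_self n) (diagonal_transpose _) hD
    (transpose_inv_eq_conj (swapJ_mul_self n) (transpose_langevin_eq_swapJ_conj γ hF hG _))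

/-- For real symmetric couplings `F`, `G` and `𝓜 = [[0, G−F], [−(G+F), 0]]`,
the matrix `S(ω)J` is complex symmetric. -/
theorem transfer_mul_swap_symmetric (n : ℕ) (hn : 1 ≤ n)
    (γ : Fin n → ℝ) (hγ : ∀ i, 0 < γ i)
    (F G : Matrix (Fin n) (Fin n) ℝ) (hF : F = Fᵀ) (hG : G = Gᵀ) (ω : ℝ)
    (hinv : IsUnit ((Complex.I * (ω : ℂ)) •
        (1 : Matrix (Fin n ⊕ Fin n) (Fin n ⊕ Fin n) ℂ) +
      diagonal (fun i => ((Sum.elim γ γ i : ℝ) : ℂ)) -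
      (Matrix.fromBlocks 0 (G - F) (-(G + F)) 0).map Complex.ofReal)) :
    transferFun n γ (Matrix.fromBlocks 0 (G - F) (-(G + F)) 0) ω * swapJ n =
      (transferFun n γ (Matrix.fromBlocks 0 (G - F) (-(G + F)) 0) ω * swapJ n)ᵀ :=
  transfer_mul_swap_symmetric_general n γ F G hF hG ω
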